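/- Strong normalization of commutative reduction via a measure: define the size |M| of a term as its number of symbols and the abstraction size |M|_λ as the sum of |N| over all subterms of M of the form λπ.N. Then every commutative reduction step M →_K N satisfies |N| = |M| and |N|_λ > |M|_λ, and moreover |M|_λ ≤ |M|² for all terms M. -/

import Mathlib

/-- Patterns of the quantum lambda calculus Q*: a classical variable, a tuple of
classical variables (represented here by pairs), or a banged variable. -/
inductive Pat where
  | pvar : ℕ → Pat
  | ptuple : ℕ → ℕ → Pat
  | pbang : ℕ → Pat
deriving DecidableEq

/-- Terms of the quantum lambda calculus Q*. -/
inductive Tm where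
  | cvar : ℕ → Tm
  | qvar : ℕ → Tm
  | bang : Tm → Tm
  | bconst : Bool → Tm
  | uop : ℕ → Tm
  | new : Tm → Tm
  | app : Tm → Tm → Tm
  | meas : Tm → Tm
  | ite : Tm → Tm → Tm → Tm
  | pair : Tm → Tm → Tm
  | lam : Pat → Tm → Tm
deriving DecidableEq

/-- The commutative reduction rules `K = {l.cm, r.cm}` of Q*, closed under all
surface contexts (not under `!`, and not in the branches of `if`). -/
inductive KStep : Tm → Tm → Prop where
  | lcm (L : Tm) (p : Pat) (M N : Tm) :
      KStep (.app L (.app (.lam p M) N)) (.app (.lam p (.app L M)) N)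
  | rcm (L : Tm) (p : Pat) (M N : Tm) :
      KStep (.app (.app (.lam p M) N) L) (.app (.lam p (.app M L)) N)
  | appL {M M' : Tm} (N : Tm) : KStep M M' → KStep (.app M N) (.app M' N)
  | appR {N N' : Tm} (M : Tm) : KStep N N' → KStep (.app M N) (.app M N')
  | pairL {M M' : Tm} (N : Tm) : KStep M M' → KStep (.pair M N) (.pair M' N)
  | pairR {N N' : Tm} (M : Tm) : KStep N N' → KStep (.pair M N) (.pair M N')
  | inNew {M M' : Tm} : KStep M M' → KStep (.new M) (.new M')
  | inMeas {M M' : Tm} : KStep M M' → KStep (.meas M) (.meas M')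
  | inIf {M M' : Tm} (N L : Tm) : KStep M M' → KStep (.ite M N L) (.ite M' N L)
  | inLam {M M' : Tm} (p : Pat) : KStep M M' → KStep (.lam p M) (.lam p M')

/-- The size of a term: its number of symbols. -/
def Tm.size : Tm → ℕ
  | .cvar _ => 1
  | .qvar _ => 1
  | .bconst _ => 1
  | .uop _ => 1
  | .bang M => 1 + M.size
  | .new M => 1 + M.size
  | .meas M => 1 + M.size
  | .app M N => 1 + M.size + N.size
  | .pair M N => 1 + M.size + N.size
  | .ite M N L => 1 + M.size + N.size + L.size
  | .lam _ M => 1 + M.size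

/-- The abstraction size of a term: the sum of `|N|` over all subterms of the
form `λπ.N`. -/
def Tm.asize : Tm → ℕ
  | .cvar _ => 0
  | .qvar _ => 0
  | .bconst _ => 0
  | .uop _ => 0
  | .bang M => M.asize
  | .new M => M.asize
  | .meas M => M.asize
  | .app M N => M.asize + N.asize
  | .pair M N => M.asize + N.asize
  | .ite M N L => M.asize + N.asize + L.asize
  | .lam _ M => M.size + M.asize

/-! A commutative step only moves an application `L ·` or `· L` under a binder `λπ`,
so no symbol is created or erased, while the body of that abstraction grows by `|L| + 1`.
The quadratic bound holds because each of the at most `|M|` abstractions has a body of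
size below `|M|`. -/

namespace Tm

theorem one_le_size (M : Tm) : 1 ≤ M.size := by
  cases M <;> simp only [size] <;> omega

theorem asize_le_size_sq (M : Tm) : M.asize ≤ M.size ^ 2 := by
  induction M with
  | cvar | qvar | bconst | uop => simp only [size, asize]; omega
  | bang M ih | new M ih | meas M ih | lam _ M ih =>
    simp only [size, asize]; nlinarith [M.one_le_size]
  | app M N ihM ihN | pair M N ihM ihN =>
    simp only [size, asize]; nlinarith [M.one_le_size, N.one_le_size]
  | ite M N L ihM ihN ihL =>
    simp only [size, asize]; nlinarith [M.one_le_size, N.one_le_size, L.one_le_size]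

end Tm

namespace KStep

theorem size_eq {M N : Tm} (h : KStep M N) : N.size = M.size := by
  induction h <;> simp only [Tm.size] <;> omega

theorem asize_lt {M N : Tm} (h : KStep M N) : M.asize < N.asize := by
  induction h with
  | inLam _ h ih => simp only [Tm.asize]; have := h.size_eq; omega
  | _ => simp only [Tm.size, Tm.asize] at *; omega

end KStep

/-- Every commutative reduction step preserves the size and strictly increases the
abstraction size; moreover the abstraction size is bounded by the square of the size. -/
theorem kstep_measure :
    (∀ M N : Tm, KStep M N → N.size = M.size ∧ M.asize < N.asize) ∧
    (∀ M : Tm, M.asize ≤ M.size ^ 2) :=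
  ⟨fun _ _ h => ⟨h.size_eq, h.asize_lt⟩, Tm.asize_le_size_sq⟩
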